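/- There is an absolute constant C > 0 such that the following holds. Let P ⊂ ℝ^d be a finite set partitioned into clusters C_1,…,C_k with centers a_1,…,a_k (write A = {a_1,…,a_k} and cost(P,A) = ∑_j ∑_{p∈C_j} ‖p−a_j‖²). Let Ω ⊆ P have |Ω| ≤ m and non-negative weights (w_q)_{q∈Ω} satisfying, for each q ∈ Ω ∩ C_j: w_q ≤ 4k|C_j|/m and w_q·‖q−a_j‖² ≤ 4·cost(P,A)/m. Then for every finite set S of centers in ℝ^d, cost_Ω(P,S) ≤ C·k·(cost(P,S) + cost(P,A)). -/

import Mathlib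

/-!
Each center `a_j` is a cheap proxy for its cluster: by the relaxed triangle inequality
`cost(p,S) ≤ 2‖p - b‖² + 2 cost(b,S)`, averaging over `C_j` gives
`|C_j| cost(a_j,S) ≤ 2 (cost(C_j,{a_j}) + cost(C_j,S))`, and applying it once more at `q`
bounds `w_q cost(q,S)` by `(8 cost(P,A) + 16 k (cost(P,A) + cost(P,S))) / m`, using the two
weight bounds for the two terms. Summing over the at most `m` points of `Ω` gives the claim
with `C = 24`.
-/

open Finset

noncomputable section

/-- `ℝ^d` as a Euclidean space. -/
abbrev Pt (d : ℕ) := EuclideanSpace ℝ (Fin d)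

/-- `cost(p,S) = min_{s ∈ S} ‖p - s‖²`. -/
noncomputable def pcost {d : ℕ} (p : Pt d) (S : Finset (Pt d)) : ℝ :=
  sInf ((fun s => ‖p - s‖ ^ 2) '' (S : Set (Pt d)))

/-- `cost(P,S) = ∑_{p ∈ P} min_{s ∈ S} ‖p - s‖²`. -/
noncomputable def scost {d : ℕ} (P S : Finset (Pt d)) : ℝ :=
  ∑ p ∈ P, pcost p S

section Cost

variable {d : ℕ}

lemma pcost_nonneg (p : Pt d) (S : Finset (Pt d)) : 0 ≤ pcost p S :=
  Real.sInf_nonneg <| by rintro x ⟨s, -, rfl⟩; positivity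

@[simp]
lemma pcost_empty (p : Pt d) : pcost p ∅ = 0 := by
  simp [pcost]

lemma pcost_le_of_mem (p : Pt d) {S : Finset (Pt d)} {s : Pt d} (hs : s ∈ S) :
    pcost p S ≤ ‖p - s‖ ^ 2 :=
  csInf_le ⟨0, by rintro x ⟨t, -, rfl⟩; positivity⟩ ⟨s, hs, rfl⟩

lemma exists_mem_pcost_eq (p : Pt d) {S : Finset (Pt d)} (hS : S.Nonempty) :
    ∃ s ∈ S, pcost p S = ‖p - s‖ ^ 2 := by
  obtain ⟨s, hs, hmin⟩ := S.exists_min_image (fun s => ‖p - s‖ ^ 2) hS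
  refine ⟨s, hs, (pcost_le_of_mem p hs).antisymm ?_⟩
  exact le_csInf ⟨_, s, hs, rfl⟩ (by rintro x ⟨t, ht, rfl⟩; exact hmin t ht)

lemma pcost_le_two_mul_add (p b : Pt d) (S : Finset (Pt d)) :
    pcost p S ≤ 2 * ‖p - b‖ ^ 2 + 2 * pcost b S := by
  rcases S.eq_empty_or_nonempty with rfl | hS
  · simp only [pcost_empty]
    positivity
  obtain ⟨s, hs, hbs⟩ := exists_mem_pcost_eq b hS
  calc pcost p S ≤ ‖p - s‖ ^ 2 := pcost_le_of_mem p hs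
    _ ≤ (‖p - b‖ + ‖b - s‖) ^ 2 := by gcongr; exact norm_sub_le_norm_sub_add_norm_sub p b s
    _ ≤ 2 * ‖p - b‖ ^ 2 + 2 * pcost b S := by rw [hbs]; linarith [add_sq_le (a := ‖p - b‖) (b := ‖b - s‖)]

lemma scost_nonneg (P S : Finset (Pt d)) : 0 ≤ scost P S :=
  sum_nonneg fun p _ => pcost_nonneg p S

lemma scost_mono {P Q : Finset (Pt d)} (hPQ : P ⊆ Q) (S : Finset (Pt d)) :
    scost P S ≤ scost Q S :=
  sum_le_sum_of_subset_of_nonneg hPQ fun p _ _ => pcost_nonneg p S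

lemma card_mul_pcost_le (C S : Finset (Pt d)) (b : Pt d) :
    #C * pcost b S ≤ 2 * (∑ p ∈ C, ‖p - b‖ ^ 2 + scost C S) := by
  rw [← nsmul_eq_mul, ← sum_const, scost, ← sum_add_distrib, mul_sum]
  refine sum_le_sum fun p _ => ?_
  rw [norm_sub_rev p b]
  linarith [pcost_le_two_mul_add b p S]

lemma mul_pcost_le {C S : Finset (Pt d)} {a q : Pt d} {w K A : ℝ} (hw : 0 ≤ w) (hK : 0 ≤ K)
    (hwC : w ≤ K * #C) (hwa : w * ‖q - a‖ ^ 2 ≤ A) :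
    w * pcost q S ≤ 2 * A + 2 * K * (2 * (∑ p ∈ C, ‖p - a‖ ^ 2 + scost C S)) := by
  have hcenter : w * pcost a S ≤ K * (2 * (∑ p ∈ C, ‖p - a‖ ^ 2 + scost C S)) :=
    calc w * pcost a S ≤ K * #C * pcost a S := mul_le_mul_of_nonneg_right hwC (pcost_nonneg a S)
      _ ≤ K * (2 * (∑ p ∈ C, ‖p - a‖ ^ 2 + scost C S)) := by
        rw [mul_assoc]; exact mul_le_mul_of_nonneg_left (card_mul_pcost_le C S a) hK
  calc w * pcost q S ≤ w * (2 * ‖q - a‖ ^ 2 + 2 * pcost a S) := by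
        gcongr; exact pcost_le_two_mul_add q a S
    _ ≤ _ := by linarith

end Cost

section Clusters

variable {d : ℕ} {ι : Type*} [Fintype ι] [DecidableEq ι]

/-- `cost(P,A)` for the clustering `p ↦ cl p` of `P` with centers `a`. -/
def clusterCost (P : Finset (Pt d)) (cl : Pt d → ι) (a : ι → Pt d) : ℝ :=
  ∑ j, ∑ p ∈ P.filter (fun p => cl p = j), ‖p - a j‖ ^ 2

lemma clusterCost_nonneg (P : Finset (Pt d)) (cl : Pt d → ι) (a : ι → Pt d) :
    0 ≤ clusterCost P cl a := by
  unfold clusterCost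
  positivity

lemma sum_filter_le_clusterCost (P : Finset (Pt d)) (cl : Pt d → ι) (a : ι → Pt d) (j : ι) :
    ∑ p ∈ P.filter (fun p => cl p = j), ‖p - a j‖ ^ 2 ≤ clusterCost P cl a :=
  single_le_sum (f := fun j => ∑ p ∈ P.filter (fun p => cl p = j), ‖p - a j‖ ^ 2)
    (fun _ _ => by positivity) (mem_univ j)

theorem sum_mul_pcost_le_of_weight_bounds {P Ω : Finset (Pt d)} {cl : Pt d → ι}
    {a : ι → Pt d} {w : Pt d → ℝ} {K : ℝ} {m : ℕ} (hK : 0 ≤ K) (hΩ : #Ω ≤ m)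
    (hw : ∀ q ∈ Ω, 0 ≤ w q)
    (hwC : ∀ q ∈ Ω, w q ≤ 4 * K * #(P.filter fun p => cl p = cl q) / m)
    (hwa : ∀ q ∈ Ω, w q * ‖q - a (cl q)‖ ^ 2 ≤ 4 * clusterCost P cl a / m)
    (S : Finset (Pt d)) :
    ∑ q ∈ Ω, w q * pcost q S
      ≤ 8 * clusterCost P cl a + 16 * K * (clusterCost P cl a + scost P S) := by
  set X := 8 * clusterCost P cl a + 16 * K * (clusterCost P cl a + scost P S)
  have hX : 0 ≤ X := by
    have := clusterCost_nonneg P cl a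
    have := scost_nonneg P S
    positivity
  have hpoint : ∀ q ∈ Ω, w q * pcost q S ≤ X / m := by
    intro q hq
    set C := P.filter fun p => cl p = cl q
    calc w q * pcost q S
        ≤ 2 * (4 * clusterCost P cl a / m)
          + 2 * (4 * K / m) * (2 * (∑ p ∈ C, ‖p - a (cl q)‖ ^ 2 + scost C S)) :=
          mul_pcost_le (hw q hq) (by positivity) (by rw [div_mul_eq_mul_div]; exact hwC q hq)
            (hwa q hq)
      _ ≤ 2 * (4 * clusterCost P cl a / m)
          + 2 * (4 * K / m) * (2 * (clusterCost P cl a + scost P S)) := by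
          gcongr
          exacts [sum_filter_le_clusterCost P cl a (cl q), scost_mono (filter_subset _ P) S]
      _ = X / m := by ring
  calc ∑ q ∈ Ω, w q * pcost q S ≤ #Ω • (X / m) := sum_le_card_nsmul Ω _ _ hpoint
    _ = (#Ω / m) * X := by rw [nsmul_eq_mul]; ring
    _ ≤ X := mul_le_of_le_one_left hX (div_le_one_of_le₀ (by exact_mod_cast hΩ) (by positivity))

end Clusters

/-- Worst-case bound on the cost of a weighted subset obeying the sensitivity weight
bounds: `cost_Ω(P,S) ≤ C·k·(cost(P,S) + cost(P,A))`. -/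
theorem worst_case_coreset_cost_bound :
    ∃ C : ℝ, 0 < C ∧
      ∀ (d k m : ℕ) (P : Finset (Pt d)) (cl : Pt d → Fin k) (a : Fin k → Pt d)
        (Ω : Finset (Pt d)) (w : Pt d → ℝ),
        Ω ⊆ P → (∀ q ∈ Ω, 0 ≤ w q) → Ω.card ≤ m →
        -- the sensitivity-sampling weight bounds
        (∀ q ∈ Ω,
          w q ≤ 4 * (k : ℝ) * (((P.filter fun p => cl p = cl q).card : ℝ)) / (m : ℝ) ∧
          w q * ‖q - a (cl q)‖ ^ 2
            ≤ 4 * (∑ j : Fin k, ∑ p ∈ P.filter (fun p => cl p = j), ‖p - a j‖ ^ 2)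
                / (m : ℝ)) →
        ∀ S : Finset (Pt d),
          (∑ q ∈ Ω, w q * pcost q S)
            ≤ C * (k : ℝ) *
                (scost P S
                  + ∑ j : Fin k, ∑ p ∈ P.filter (fun p => cl p = j), ‖p - a j‖ ^ 2) := by
  refine ⟨24, by norm_num, fun d k m P cl a Ω w _ hw hΩ hbounds S => ?_⟩
  have hk : (1 : ℝ) ≤ k := by exact_mod_cast (cl 0).pos
  have hbound := sum_mul_pcost_le_of_weight_bounds k.cast_nonneg hΩ hw
    (fun q hq => (hbounds q hq).1) (fun q hq => (hbounds q hq).2) S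
  have hA := clusterCost_nonneg P cl a
  have hS := scost_nonneg P S
  unfold clusterCost at hbound hA
  linarith [mul_le_mul_of_nonneg_right hk hA, mul_nonneg k.cast_nonneg hS]
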